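/- arXiv:1804.01707 — 2 statements merged into one kernel-verified Lean document; each statement's English description precedes it below -/
import Mathlib

section
/- Let R be a commutative ring, let I_1, ..., I_k, I_{k+1}, ..., I_r be ideals of R, and let p, n_{k+1}, ..., n_r be nonnegative integers with n_{k+1} + ... + n_r ≤ p. Then the sum over all tuples (i_1, ..., i_r) of nonnegative integers with i_1 + ... + i_r = p and i_j ≤ n_j for j = k+1, ..., r of I_1^{i_1} ⋯ I_r^{i_r} equals (I_1 + ... + I_k)^{p − (n_{k+1} + ... + n_r)} · ∏_{j=k+1}^r (I_1 + ... + I_k + I_j)^{n_j}. -/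
set_option maxHeartbeats 800000

open Finset

/-- In the semiring of ideals, every nonzero natural number casts to `1`. -/
lemma Ideal.natCast_eq_one' {R : Type*} [CommRing R] {c : ℕ} (hc : c ≠ 0) :
    (c : Ideal R) = 1 := by
  obtain ⟨d, rfl⟩ := Nat.exists_eq_succ_of_ne_zero hc
  have h : ((d + 1 : ℕ) : Ideal R) = (d : Ideal R) + 1 := by push_cast; ring
  rw [h, Ideal.one_eq_top, Submodule.add_eq_sup, sup_top_eq]

/-- Binomial theorem for ideals. -/
lemma Ideal.add_pow_eq' {R : Type*} [CommRing R] (I J : Ideal R) (m : ℕ) :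
    (I + J) ^ m = ∑ j ∈ range (m + 1), I ^ (m - j) * J ^ j := by
  rw [add_comm I J, add_pow]
  refine Finset.sum_congr rfl fun j hj => ?_
  rw [mem_range, Nat.lt_succ_iff] at hj
  rw [Ideal.natCast_eq_one' (Nat.choose_pos hj).ne', mul_one, mul_comm]

lemma Ideal.prod_mono' {R : Type*} [CommRing R] {ι : Type*} {s : Finset ι}
    {f g : ι → Ideal R} (h : ∀ a ∈ s, f a ≤ g a) : ∏ a ∈ s, f a ≤ ∏ a ∈ s, g a := by
  classical
  induction s using Finset.induction with
  | empty => simp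
  | @insert b t hb ih =>
    rw [Finset.prod_insert hb, Finset.prod_insert hb]
    exact Ideal.mul_mono (h _ (Finset.mem_insert_self _ _))
      (ih fun a ha => h a (Finset.mem_insert_of_mem ha))

lemma Ideal.pow_mono' {R : Type*} [CommRing R] {I J : Ideal R} (h : I ≤ J) (m : ℕ) :
    I ^ m ≤ J ^ m := by
  induction m with
  | zero => simp
  | succ m ih => rw [pow_succ, pow_succ]; exact Ideal.mul_mono ih h

/-- Multinomial theorem for ideals. -/
lemma Ideal.sum_pow_eq' {R : Type*} [CommRing R] {k : ℕ} (A : Fin k → Ideal R) (m : ℕ) :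
    (∑ a, A a) ^ m = ∑ i ∈ Finset.Nat.antidiagonalTuple k m, ∏ a, A a ^ i a := by
  induction m with
  | zero => simp [Finset.Nat.antidiagonalTuple_zero_right, Ideal.top_pow]
  | succ m ih =>
    apply le_antisymm
    · rw [pow_succ, ih, Finset.sum_mul]
      rw [Ideal.sum_eq_sup, Finset.sup_le_iff]
      intro i hi
      rw [Finset.mul_sum, Ideal.sum_eq_sup, Finset.sup_le_iff]
      intro a _
      rw [Finset.Nat.mem_antidiagonalTuple] at hi
      set i' : Fin k → ℕ := Function.update i a (i a + 1) with hi'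
      have hmem : i' ∈ Finset.Nat.antidiagonalTuple k (m + 1) := by
        rw [Finset.Nat.mem_antidiagonalTuple]
        rw [hi', Finset.sum_update_of_mem (Finset.mem_univ a), Finset.sdiff_singleton_eq_erase]
        rw [← Finset.sum_erase_add _ _ (Finset.mem_univ a)] at hi
        omega
      calc (∏ b, A b ^ i b) * A a = ∏ b, A b ^ i' b := by
            rw [← Finset.mul_prod_erase Finset.univ _ (Finset.mem_univ a),
              ← Finset.mul_prod_erase Finset.univ (fun b => A b ^ i' b) (Finset.mem_univ a)]
            have h1 : i' a = i a + 1 := Function.update_self a (i a + 1) i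
            have h2 : ∀ b ∈ Finset.univ.erase a, A b ^ i' b = A b ^ i b := by
              intro b hb
              rw [hi', Function.update_of_ne (Finset.ne_of_mem_erase hb)]
            rw [Finset.prod_congr rfl h2, h1, pow_succ, mul_right_comm]
          _ ≤ _ := Finset.single_le_sum (f := fun i => ∏ a, A a ^ i a) (fun _ _ => bot_le) hmem
    · rw [Ideal.sum_eq_sup, Finset.sup_le_iff]
      intro i hi
      rw [Finset.Nat.mem_antidiagonalTuple] at hi
      calc ∏ a, A a ^ i a ≤ ∏ a, (∑ b, A b) ^ i a := by
            refine Ideal.prod_mono' fun a _ => Ideal.pow_mono' ?_ _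
            exact Finset.single_le_sum (fun b _ => bot_le) (Finset.mem_univ a)
          _ = (∑ b, A b) ^ (m + 1) := by
            rw [Finset.prod_pow_eq_pow_sum, hi]

/-- Lemma 2.1 of the paper.  For ideals `A_1, …, A_k` and `B_1, …, B_s` of a
commutative ring `R`, and nonnegative integers `p` and `n_1, …, n_s` with
`∑ n_l ≤ p`, the sum over all tuples `(i, j)` with `∑ i + ∑ j = p` and
`j_l ≤ n_l` of `∏ A_a^{i_a} · ∏ B_l^{j_l}` equals
`(∑ A_a)^{p - ∑ n_l} · ∏ (∑ A_a + B_l)^{n_l}`. -/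
theorem sum_prod_eq_pow_mul_prod (R : Type*) [CommRing R] (k s p : ℕ)
    (A : Fin k → Ideal R) (B : Fin s → Ideal R) (n : Fin s → ℕ)
    (hn : ∑ l, n l ≤ p) :
    ∑ j ∈ Finset.Iic n,
        (∑ i ∈ Finset.Nat.antidiagonalTuple k (p - ∑ l, j l), ∏ a, A a ^ i a) *
          ∏ l, B l ^ j l
      = (∑ a, A a) ^ (p - ∑ l, n l) * ∏ l, ((∑ a, A a) + B l) ^ n l := by
  set S := ∑ a, A a with hS
  have key : ∀ j ∈ Finset.Iic n,
      (∑ i ∈ Finset.Nat.antidiagonalTuple k (p - ∑ l, j l), ∏ a, A a ^ i a) *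
        ∏ l, B l ^ j l = S ^ (p - ∑ l, j l) * ∏ l, B l ^ j l := by
    intro j _
    rw [Ideal.sum_pow_eq']
  rw [Finset.sum_congr rfl key]
  -- expand the RHS
  conv_rhs => rw [Finset.prod_congr rfl fun l (_ : l ∈ Finset.univ) => Ideal.add_pow_eq' S (B l) (n l)]
  rw [Finset.prod_univ_sum, Finset.mul_sum]
  have hset : Fintype.piFinset (fun l => range (n l + 1)) = Finset.Iic n := by
    ext j
    simp [Fintype.mem_piFinset, Nat.lt_succ_iff, Pi.le_def]
  rw [hset]
  refine (Finset.sum_congr rfl fun j hj => ?_).symm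
  rw [Finset.mem_Iic, Pi.le_def] at hj
  have hsum : ∑ l, j l ≤ ∑ l, n l := Finset.sum_le_sum fun l _ => hj l
  have hsub : ∑ l, (n l - j l) = ∑ l, n l - ∑ l, j l :=
    Finset.sum_tsub_distrib Finset.univ fun l _ => hj l
  rw [Finset.prod_mul_distrib, ← mul_assoc, Finset.prod_pow_eq_pow_sum, ← pow_add, hsub]
  congr 2
  omega
end

section
/- Let R be a commutative ring, let M = I_1 ⊕ ... ⊕ I_r ⊆ F = R^r for ideals I_1, ..., I_r of R, let S = Sym_R(F) ≅ R[t_1, ..., t_r], and identify R[M] with the multi-Rees algebra R[I_1 t_1, ..., I_r t_r]. Then for any nonnegative integers p and q, the degree-(p+q) component of M^p · S satisfies: M^p S_q = ⊕_{|n| = p+q, n ≥ 0} ( Σ_{|i| = p, 0 ≤ i ≤ n} I_1^{i_1} ⋯ I_r^{i_r} ) t^n, where n = (n_1, ..., n_r) and i = (i_1, ..., i_r) range over multi-indices. -/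
open MvPolynomial

section Helpers

variable {R : Type*} [CommRing R]

private lemma sum_smul' {M : Type*} [AddCommGroup M] [Module R M] {ι : Type*}
    (s : Finset ι) (f : ι → Ideal R) (N : Submodule R M) :
    (∑ i ∈ s, f i) • N = ∑ i ∈ s, f i • N := by
  classical
  induction s using Finset.induction with
  | empty => simp
  | insert _ _ h ih =>
      rw [Finset.sum_insert h, Finset.sum_insert h, Submodule.add_eq_sup,
        Submodule.add_eq_sup, Submodule.sup_smul, ih]

private lemma sum_le' {M : Type*} [AddCommGroup M] [Module R M] {ι : Type*}
    {s : Finset ι} {f : ι → Submodule R M} {C : Submodule R M}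
    (h : ∀ i ∈ s, f i ≤ C) : ∑ i ∈ s, f i ≤ C := by
  classical
  induction s using Finset.induction with
  | empty => simp
  | insert _ _ hmem ih =>
      rw [Finset.sum_insert hmem, Submodule.add_eq_sup]
      exact sup_le (h _ (Finset.mem_insert_self _ _))
        (ih fun i hi => h i (Finset.mem_insert_of_mem hi))

private lemma smul_span_mul {A : Type*} [CommRing A] [Algebra R A]
    (I J : Ideal R) (x y : A) :
    (I • Submodule.span R {x}) * (J • Submodule.span R {y})
      = (I * J) • Submodule.span R {x * y} := by
  apply le_antisymm
  · rw [Submodule.mul_le]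
    intro m hm n hn
    obtain ⟨a, ha, rfl⟩ := Submodule.mem_smul_span_singleton.1 hm
    obtain ⟨b, hb, rfl⟩ := Submodule.mem_smul_span_singleton.1 hn
    refine Submodule.mem_smul_span_singleton.2 ⟨a * b, Ideal.mul_mem_mul ha hb, ?_⟩
    rw [Algebra.smul_mul_assoc, Algebra.mul_smul_comm, smul_smul]
  · intro z hz
    obtain ⟨c, hc, rfl⟩ := Submodule.mem_smul_span_singleton.1 hz
    refine Submodule.mul_induction_on hc ?_ ?_
    · intro a ha b hb
      have : (a * b) • (x * y) = (a • x) * (b • y) := by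
        rw [Algebra.smul_mul_assoc, Algebra.mul_smul_comm, smul_smul]
      rw [this]
      exact Submodule.mul_mem_mul (Submodule.mem_smul_span_singleton.2 ⟨a, ha, rfl⟩)
        (Submodule.mem_smul_span_singleton.2 ⟨b, hb, rfl⟩)
    · intro u v hu hv
      rw [add_smul]
      exact add_mem hu hv

variable {r : ℕ}

private lemma deg_add (a b : Fin r →₀ ℕ) :
    ((a + b).sum fun _ e => e) = (a.sum fun _ e => e) + (b.sum fun _ e => e) :=
  Finsupp.sum_add_index' (fun _ => rfl) (fun _ _ _ => rfl)

private lemma deg_single (j : Fin r) :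
    ((Finsupp.single j 1 : Fin r →₀ ℕ).sum fun _ e => e) = 1 :=
  Finsupp.sum_single_index rfl

private lemma deg_eq_zero {i : Fin r →₀ ℕ} : (i.sum fun _ e => e) = 0 ↔ i = 0 := by
  constructor
  · intro h
    ext a
    rw [Finsupp.sum, Finset.sum_eq_zero_iff] at h
    by_cases ha : a ∈ i.support
    · exact h a ha
    · simpa [Finsupp.mem_support_iff] using ha
  · rintro rfl; simp

private lemma prod_pow_add (I : Fin r → Ideal R) (i : Fin r →₀ ℕ) (j : Fin r) :
    I j * ∏ k, I k ^ i k = ∏ k, I k ^ ((i + Finsupp.single j 1 : Fin r →₀ ℕ) k) := by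
  have h : ∀ k, (i + Finsupp.single j 1 : Fin r →₀ ℕ) k = i k + (if j = k then 1 else 0) := by
    intro k; simp [Finsupp.single_apply]
  simp only [h, pow_add, Finset.prod_mul_distrib, pow_ite, pow_one, pow_zero,
    Finset.prod_ite_eq, Finset.mem_univ, if_true]
  ring

/-- The coefficient ideal. -/
private noncomputable def Jdeg (p : ℕ) (I : Fin r → Ideal R) (n : Fin r →₀ ℕ) : Ideal R :=
  ∑ i ∈ (Finset.Iic n).filter (fun i => (i.sum fun _ e => e) = p), ∏ j, I j ^ i j

private lemma step (p s : ℕ) (I : Fin r → Ideal R) :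
    (∑ j : Fin r, I j • Submodule.span R {(X j : MvPolynomial (Fin r) R)}) *
        (⨆ n : {n : Fin r →₀ ℕ // (n.sum fun _ e => e) = s},
          Jdeg p I n.1 • Submodule.span R {(monomial n.1 1 : MvPolynomial (Fin r) R)})
      = ⨆ m : {m : Fin r →₀ ℕ // (m.sum fun _ e => e) = s + 1},
          Jdeg (p + 1) I m.1 •
            Submodule.span R {(monomial m.1 1 : MvPolynomial (Fin r) R)} := by
  rw [Submodule.mul_iSup]
  apply le_antisymm
  · apply iSup_le
    rintro ⟨n, hn⟩
    rw [Finset.sum_mul]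
    apply sum_le'
    intro j _
    have hx : (X j : MvPolynomial (Fin r) R) * monomial n 1
        = monomial (n + Finsupp.single j 1) 1 := by
      rw [X, monomial_mul, one_mul, add_comm]
    rw [smul_span_mul, hx]
    have hmem : ((n + Finsupp.single j 1 : Fin r →₀ ℕ).sum fun _ e => e) = s + 1 := by
      rw [deg_add, deg_single, hn]
    refine le_trans ?_ (le_iSup _ ⟨n + Finsupp.single j 1, hmem⟩)
    apply Submodule.smul_mono_left
    rw [Jdeg, Finset.mul_sum]
    apply sum_le'
    intro i hi
    simp only [Finset.mem_filter, Finset.mem_Iic] at hi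
    rw [prod_pow_add]
    refine Finset.single_le_sum (f := fun i : Fin r →₀ ℕ => ∏ j, I j ^ i j) (fun _ _ => bot_le) ?_
    simp only [Finset.mem_filter, Finset.mem_Iic]
    exact ⟨add_le_add_left hi.1 _, by rw [deg_add, deg_single, hi.2]⟩
  · apply iSup_le
    rintro ⟨m, hm⟩
    rw [Jdeg, sum_smul']
    apply sum_le'
    intro i hi
    simp only [Finset.mem_filter, Finset.mem_Iic] at hi
    have hine : i ≠ 0 := by
      intro h; rw [h] at hi; simp [Finsupp.sum_zero_index] at hi
    obtain ⟨j, hj⟩ : ∃ j, i j ≠ 0 := by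
      by_contra h
      push_neg at h
      exact hine (Finsupp.ext fun a => h a)
    have hji : Finsupp.single j 1 ≤ i := Finsupp.single_le_iff.2 (Nat.one_le_iff_ne_zero.2 hj)
    have hjm : Finsupp.single j 1 ≤ m := le_trans hji hi.1
    have hi' : i - Finsupp.single j 1 + Finsupp.single j 1 = i := tsub_add_cancel_of_le hji
    have hm' : m - Finsupp.single j 1 + Finsupp.single j 1 = m := tsub_add_cancel_of_le hjm
    have hdm : ((m - Finsupp.single j 1 : Fin r →₀ ℕ).sum fun _ e => e) = s := by
      have := deg_add (m - Finsupp.single j 1) (Finsupp.single j 1)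
      rw [hm', hm, deg_single] at this
      omega
    have hdi : ((i - Finsupp.single j 1 : Fin r →₀ ℕ).sum fun _ e => e) = p := by
      have := deg_add (i - Finsupp.single j 1) (Finsupp.single j 1)
      rw [hi', hi.2, deg_single] at this
      omega
    have him : i - Finsupp.single j 1 ≤ m - Finsupp.single j 1 :=
      tsub_le_tsub_right hi.1 _
    have hprod : ∏ k, I k ^ i k = I j * ∏ k, I k ^ ((i - Finsupp.single j 1 : Fin r →₀ ℕ) k) := by
      rw [prod_pow_add, hi']
    have hmono : (monomial m 1 : MvPolynomial (Fin r) R)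
        = X j * monomial (m - Finsupp.single j 1) 1 := by
      rw [X, monomial_mul, one_mul, add_comm, hm']
    rw [hprod, hmono, ← smul_span_mul]
    refine le_trans (mul_le_mul' ?_ ?_)
      (le_iSup (fun n : {n : Fin r →₀ ℕ // (n.sum fun _ e => e) = s} =>
        (∑ j : Fin r, I j • Submodule.span R {(X j : MvPolynomial (Fin r) R)}) *
          (Jdeg p I n.1 • Submodule.span R {(monomial n.1 1 : MvPolynomial (Fin r) R)}))
        ⟨m - Finsupp.single j 1, hdm⟩)
    · exact Finset.single_le_sum
        (f := fun j => I j • Submodule.span R {(X j : MvPolynomial (Fin r) R)})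
        (fun _ _ => bot_le) (Finset.mem_univ j)
    · apply Submodule.smul_mono_left
      rw [Jdeg]
      refine Finset.single_le_sum (f := fun i : Fin r →₀ ℕ => ∏ j, I j ^ i j) (fun _ _ => bot_le) ?_
      simp only [Finset.mem_filter, Finset.mem_Iic]
      exact ⟨him, hdi⟩

private lemma spanSq (q : ℕ) :
    Submodule.span R
        {x : MvPolynomial (Fin r) R |
          ∃ n : Fin r →₀ ℕ, (n.sum fun _ e => e) = q ∧ x = monomial n 1}
      = ⨆ n : {n : Fin r →₀ ℕ // (n.sum fun _ e => e) = q},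
          Submodule.span R {(monomial n.1 1 : MvPolynomial (Fin r) R)} := by
  apply le_antisymm
  · rw [Submodule.span_le]
    rintro x ⟨n, hn, rfl⟩
    exact le_iSup (fun n : {n : Fin r →₀ ℕ // (n.sum fun _ e => e) = q} =>
      Submodule.span R {(monomial n.1 1 : MvPolynomial (Fin r) R)}) ⟨n, hn⟩
      (Submodule.subset_span rfl)
  · apply iSup_le
    rintro ⟨n, hn⟩
    rw [Submodule.span_le]
    rintro x rfl
    exact Submodule.subset_span ⟨n, hn, rfl⟩

end Helpers

/-- Degree-(p+q) component of `M^p·S` for `M = I_1 ⊕ ⋯ ⊕ I_r ⊆ R^r`, realized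
inside the polynomial ring `S = R[t_1, …, t_r]`: the submodule `M^p S_q` equals
the (direct) sum over multi-indices `n` with `|n| = p + q` of
`(∑_{|i| = p, 0 ≤ i ≤ n} I_1^{i_1} ⋯ I_r^{i_r}) · t^n`. -/
theorem MpSq_decomposition (R : Type*) [CommRing R] (r p q : ℕ)
    (I : Fin r → Ideal R) :
    ((∑ j : Fin r,
          I j • Submodule.span R {(X j : MvPolynomial (Fin r) R)}) ^ p) *
        Submodule.span R
          {x : MvPolynomial (Fin r) R |
            ∃ n : Fin r →₀ ℕ, (n.sum fun _ e => e) = q ∧ x = monomial n 1}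
      = ⨆ n : {n : Fin r →₀ ℕ // (n.sum fun _ e => e) = p + q},
          (∑ i ∈ (Finset.Iic n.1).filter (fun i => (i.sum fun _ e => e) = p),
              ∏ j, I j ^ i j) •
            Submodule.span R {(monomial n.1 1 : MvPolynomial (Fin r) R)} := by
  show _ = ⨆ n : {n : Fin r →₀ ℕ // (n.sum fun _ e => e) = p + q},
      Jdeg p I n.1 • Submodule.span R {(monomial n.1 1 : MvPolynomial (Fin r) R)}
  induction p with
  | zero =>
      rw [pow_zero, one_mul, spanSq]
      rw [show (0 : ℕ) + q = q from Nat.zero_add q]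
      apply iSup_congr
      rintro ⟨n, hn⟩
      have hfilter : (Finset.Iic n).filter
          (fun i : Fin r →₀ ℕ => (i.sum fun _ e => e) = 0) = {0} := by
        ext i
        simp only [Finset.mem_filter, Finset.mem_Iic, deg_eq_zero, Finset.mem_singleton]
        constructor
        · exact fun h => h.2
        · rintro rfl; exact ⟨zero_le, rfl⟩
      rw [Jdeg, hfilter, Finset.sum_singleton]
      have h1 : (∏ j, I j ^ (0 : Fin r →₀ ℕ) j) = ⊤ := by
        rw [← Ideal.one_eq_top]
        exact Finset.prod_eq_one fun j _ => by simp
      rw [h1, Submodule.top_smul]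
  | succ p ih =>
      rw [pow_succ, mul_comm ((∑ j : Fin r,
          I j • Submodule.span R {(X j : MvPolynomial (Fin r) R)}) ^ p), mul_assoc, ih,
        step p (p + q) I]
      rw [show p + 1 + q = p + q + 1 from by omega]
end
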